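/- Fix t > 0 and let (μ_t) be an ATS mixing family. Suppose I : ℝ → (0,∞) is differentiable at 0 and satisfies, for all y in a neighborhood of 0, the implied volatility equation ∫ c_t(z,y) dμ_t(z) = N(−y/I(y) + I(y)·√t/2) − e^{y·√t}·N(−y/I(y) − I(y)·√t/2), where c_t(z,y) := e^{φ_t·t − t·σ̄²·η_t·z}·N(−y/(σ̄·√z) + l_t^z + σ̄·√(z·t)/2) − e^{y·√t}·N(−y/(σ̄·√z) + l_t^z − σ̄·√(z·t)/2). Then I′(0) = [ N(−I(0)·√t/2) − ∫ N(l_t^z − σ̄·√(z·t)/2) dμ_t(z) ] / N′(−I(0)·√t/2). -/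

import Mathlib

/-!
Differentiate both sides of the implied volatility equation at `y = 0`. On the left we
differentiate under the integral sign (the integrand is bounded because `z ≥ 0` μ-a.s. and
`η_t > 0`). Writing `d± = x ± a` with `x = -y/(σ̄√z) + l_t^z` and `a = σ̄√(zt)/2`, the identity
`N'(x - a) = e^{2ax} N'(x + a)` makes the two Gaussian-density terms cancel, as in the classical
Black–Scholes computation, leaving `-√t ∫ N(d₋) dμ`. On the right, at `y = 0` the `1/I(0)`
terms cancel because `N'` is even, leaving `√t (I'(0) N'(-I(0)√t/2) - N(-I(0)√t/2))`.
-/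

open MeasureTheory Real Filter Set Topology Asymptotics

/-- The ATS Laplace transform `L_t(u)` with parameters `α ∈ (0,1)`, `k̄ > 0`, `β ∈ ℝ`,
where `k_t = k̄·t^β`. -/
noncomputable def ATSLaplace (α kbar β : ℝ) (t u : ℝ) : ℝ :=
  Real.exp ((t / (kbar * t ^ β)) * ((1 - α) / α) *
    (1 - (1 + u * (kbar * t ^ β) / ((1 - α) * t)) ^ α))

/-- Standard normal cumulative distribution function. -/
noncomputable def stdN (z : ℝ) : ℝ :=
  (Real.sqrt (2 * Real.pi))⁻¹ * ∫ x in Set.Iic z, Real.exp (-x ^ 2 / 2)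

/-- Standard normal probability density function. -/
noncomputable def stdNd (z : ℝ) : ℝ :=
  (Real.sqrt (2 * Real.pi))⁻¹ * Real.exp (-z ^ 2 / 2)

/-- The drift `φ_t`, defined by `φ_t·t = −ln L_t(t·σ̄²·η_t)` with `η_t = η̄·t^δ`. -/
noncomputable def ATSphi (α kbar σbar ηbar β δ : ℝ) (t : ℝ) : ℝ :=
  -Real.log (ATSLaplace α kbar β t (t * σbar ^ 2 * (ηbar * t ^ δ))) / t

/-- The quantity `l_t^z = −σ̄·η_t·√(z·t) + φ_t·√t/(σ̄·√z)`. -/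
noncomputable def ATSl (α kbar σbar ηbar β δ : ℝ) (t z : ℝ) : ℝ :=
  -(σbar * (ηbar * t ^ δ)) * Real.sqrt (z * t) +
    ATSphi α kbar σbar ηbar β δ t * Real.sqrt t / (σbar * Real.sqrt z)

/-- The ATM ATS call price `C_t`. -/
noncomputable def ATSCall (α kbar σbar ηbar β δ : ℝ) (μ : Measure ℝ) (t : ℝ) : ℝ :=
  ∫ z, (Real.exp (ATSphi α kbar σbar ηbar β δ t * t - t * σbar ^ 2 * (ηbar * t ^ δ) * z) *
      stdN (ATSl α kbar σbar ηbar β δ t z + σbar * Real.sqrt (z * t) / 2) -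
      stdN (ATSl α kbar σbar ηbar β δ t z - σbar * Real.sqrt (z * t) / 2)) ∂μ

/-- The skew term `ξ̂_t`. -/
noncomputable def ATSSkew (α kbar σbar ηbar β δ : ℝ) (μ : Measure ℝ) (σhat : ℝ → ℝ)
    (t : ℝ) : ℝ :=
  (stdN (-(σhat t * Real.sqrt t / 2)) -
      ∫ z, stdN (ATSl α kbar σbar ηbar β δ t z - σbar * Real.sqrt (z * t) / 2) ∂μ) /
    stdNd (-(σhat t * Real.sqrt t / 2))

lemma integrable_exp_neg_sq_div_two : Integrable (fun x : ℝ => exp (-x ^ 2 / 2)) := by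
  convert integrable_exp_neg_mul_sq (b := 1 / 2) (by norm_num) using 3 with x
  ring

lemma integral_exp_neg_sq_div_two : ∫ x : ℝ, exp (-x ^ 2 / 2) = √(2 * π) := by
  convert integral_gaussian (1 / 2) using 2 with x <;> ring_nf

lemma hasDerivAt_stdN (x : ℝ) : HasDerivAt stdN (stdNd x) x := by
  have hint := integrable_exp_neg_sq_div_two
  have hsplit : ∀ y, stdN y = (√(2 * π))⁻¹ *
      ((∫ u in Iic 0, exp (-u ^ 2 / 2)) + ∫ u in (0 : ℝ)..y, exp (-u ^ 2 / 2)) := fun y => by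
    rw [stdN, ← intervalIntegral.integral_Iic_sub_Iic hint.integrableOn hint.integrableOn]
    ring
  have hFTC : HasDerivAt (fun y => ∫ u in (0 : ℝ)..y, exp (-u ^ 2 / 2)) (exp (-x ^ 2 / 2)) x :=
    intervalIntegral.integral_hasDerivAt_right hint.intervalIntegrable
      hint.aestronglyMeasurable.stronglyMeasurableAtFilter (by fun_prop)
  rw [funext hsplit]
  exact (hFTC.const_add _).const_mul _

@[fun_prop]
lemma measurable_stdN : Measurable stdN :=
  continuous_iff_continuousAt.2 (fun x => (hasDerivAt_stdN x).continuousAt) |>.measurable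

lemma stdN_nonneg (x : ℝ) : 0 ≤ stdN x :=
  mul_nonneg (by positivity) (setIntegral_nonneg measurableSet_Iic fun _ _ => (exp_pos _).le)

lemma stdN_le_one (x : ℝ) : stdN x ≤ 1 := by
  have hle : ∫ u in Iic x, exp (-u ^ 2 / 2) ≤ √(2 * π) :=
    integral_exp_neg_sq_div_two ▸ setIntegral_le_integral integrable_exp_neg_sq_div_two
      (Eventually.of_forall fun _ => (exp_pos _).le)
  calc stdN x ≤ (√(2 * π))⁻¹ * √(2 * π) := by unfold stdN; gcongr
    _ = 1 := inv_mul_cancel₀ (by positivity)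

lemma stdNd_pos (x : ℝ) : 0 < stdNd x := by
  unfold stdNd
  positivity

lemma stdNd_neg (x : ℝ) : stdNd (-x) = stdNd x := by
  simp [stdNd]

lemma stdNd_sub_eq_exp_mul (x a : ℝ) : stdNd (x - a) = exp (2 * a * x) * stdNd (x + a) := by
  rw [stdNd, stdNd, mul_left_comm, ← exp_add]
  ring_nf

lemma abs_mul_stdN_sub_mul_stdN_le {a b : ℝ} (ha : 0 ≤ a) (hb : 0 ≤ b) (x x' : ℝ) :
    |a * stdN x - b * stdN x'| ≤ a + b := by
  have h₁ := mul_le_of_le_one_right ha (stdN_le_one x)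
  have h₂ := mul_le_of_le_one_right hb (stdN_le_one x')
  have h₃ := mul_nonneg ha (stdN_nonneg x)
  have h₄ := mul_nonneg hb (stdN_nonneg x')
  rw [abs_le]
  constructor <;> linarith

-- `dMid σ̄ η_t φ_t t y z = -y/(σ̄√z) + l_t^z` is the midpoint of the two arguments `d±` of `N`
-- in `callIntegrand σ̄ η_t φ_t t y z = c_t(z, y)`.
noncomputable def dMid (σ η φ t y z : ℝ) : ℝ :=
  -(y / (σ * √z)) + (-(σ * η) * √(z * t) + φ * √t / (σ * √z))

noncomputable def callIntegrand (σ η φ t y z : ℝ) : ℝ :=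
  exp (φ * t - t * σ ^ 2 * η * z) * stdN (dMid σ η φ t y z + σ * √(z * t) / 2) -
    exp (y * √t) * stdN (dMid σ η φ t y z - σ * √(z * t) / 2)

section

variable {σ η φ t : ℝ}

lemma two_mul_mul_dMid (hσ : σ ≠ 0) (ht : 0 ≤ t) {z : ℝ} (hz : 0 < z) (y : ℝ) :
    2 * (σ * √(z * t) / 2) * dMid σ η φ t y z = φ * t - t * σ ^ 2 * η * z - y * √t := by
  have hsz : √z ≠ 0 := (sqrt_pos.2 hz).ne'
  rw [dMid, sqrt_mul hz.le]
  field_simp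
  linear_combination (φ - σ ^ 2 * η * z) * mul_self_sqrt ht - √t ^ 2 * σ ^ 2 * η * sq_sqrt hz.le

lemma hasDerivAt_callIntegrand (hσ : σ ≠ 0) (ht : 0 ≤ t) (y z : ℝ) :
    HasDerivAt (fun y => callIntegrand σ η φ t y z)
      (-√t * exp (y * √t) * stdN (dMid σ η φ t y z - σ * √(z * t) / 2)) y := by
  set D := σ * √z
  set a := σ * √(z * t) / 2
  have hd : HasDerivAt (fun y => dMid σ η φ t y z) (-D⁻¹) y := by
    simpa only [dMid, id, one_div, Pi.neg_apply] using
      ((hasDerivAt_id y).div_const D).neg.add_const (-(σ * η) * √(z * t) + φ * √t / D)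
  have hcall := (((hasDerivAt_stdN _).comp y (hd.add_const a)).const_mul
    (exp (φ * t - t * σ ^ 2 * η * z))).sub
    ((hasDerivAt_mul_const √t).exp.mul ((hasDerivAt_stdN _).comp y (hd.sub_const a)))
  have hcancel : exp (φ * t - t * σ ^ 2 * η * z) * stdNd (dMid σ η φ t y z + a) * D⁻¹ =
      exp (y * √t) * stdNd (dMid σ η φ t y z - a) * D⁻¹ := by
    -- at `z = 0` the divisions by `σ√z` are junk, but the factor `D⁻¹` vanishes
    rcases eq_or_ne √z 0 with hz | hz
    · simp [D, hz]
    rw [stdNd_sub_eq_exp_mul, two_mul_mul_dMid hσ ht (sqrt_ne_zero'.1 hz), ← mul_assoc,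
      ← exp_add, add_sub_cancel]
  refine hcall.congr_deriv ?_
  simp only [Function.comp_apply]
  linear_combination -hcancel

end

section

variable {σ η φ t : ℝ} {μ : Measure ℝ}

@[fun_prop]
lemma measurable_dMid (y : ℝ) : Measurable (dMid σ η φ t y) := by
  unfold dMid
  fun_prop

lemma measurable_callIntegrand (y : ℝ) : Measurable (callIntegrand σ η φ t y) := by
  unfold callIntegrand
  fun_prop

lemma integrable_callIntegrand [IsFiniteMeasure μ] (hη : 0 ≤ η) (ht : 0 ≤ t)
    (hμ : ∀ᵐ z ∂μ, 0 ≤ z) (y : ℝ) : Integrable (callIntegrand σ η φ t y) μ := by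
  refine Integrable.mono' (integrable_const (exp (φ * t) + exp (y * √t)))
    (measurable_callIntegrand y).aestronglyMeasurable ?_
  filter_upwards [hμ] with z hz
  have hdiscount : exp (φ * t - t * σ ^ 2 * η * z) ≤ exp (φ * t) :=
    exp_le_exp.2 (sub_le_self _ (by positivity))
  exact (abs_mul_stdN_sub_mul_stdN_le (exp_pos _).le (exp_pos _).le _ _).trans
    (by linarith)

lemma hasDerivAt_integral_callIntegrand [IsFiniteMeasure μ] (hσ : σ ≠ 0) (hη : 0 ≤ η)
    (ht : 0 ≤ t) (hμ : ∀ᵐ z ∂μ, 0 ≤ z) (y₀ : ℝ) :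
    HasDerivAt (fun y => ∫ z, callIntegrand σ η φ t y z ∂μ)
      (-√t * exp (y₀ * √t) * ∫ z, stdN (dMid σ η φ t y₀ z - σ * √(z * t) / 2) ∂μ) y₀ := by
  have hbound : ∀ z, ∀ y ∈ Metric.ball y₀ 1,
      ‖-√t * exp (y * √t) * stdN (dMid σ η φ t y z - σ * √(z * t) / 2)‖ ≤
        √t * exp ((|y₀| + 1) * √t) := by
    intro z y hy
    have hy' : y ≤ |y₀| + 1 := by
      have := abs_sub_abs_le_abs_sub y y₀
      rw [Metric.mem_ball, dist_eq_norm, norm_eq_abs] at hy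
      linarith [le_abs_self y]
    rw [norm_mul, norm_mul, norm_neg, norm_of_nonneg (sqrt_nonneg t),
      norm_of_nonneg (exp_pos _).le, norm_of_nonneg (stdN_nonneg _), mul_assoc]
    gcongr
    exact (mul_le_of_le_one_right (exp_pos _).le (stdN_le_one _)).trans
      (exp_le_exp.2 (by gcongr))
  rw [← integral_const_mul]
  refine (hasDerivAt_integral_of_dominated_loc_of_deriv_le (Metric.ball_mem_nhds y₀ one_pos)
    (Eventually.of_forall fun y => (measurable_callIntegrand y).aestronglyMeasurable)
    (integrable_callIntegrand hη ht hμ y₀) (Measurable.aestronglyMeasurable (by fun_prop))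
    (ae_of_all _ hbound) (integrable_const _)
    (ae_of_all _ fun z y _ => hasDerivAt_callIntegrand hσ ht y z)).2

end

lemma hasDerivAt_impliedCall_zero {I : ℝ → ℝ} {I' : ℝ} (hI : HasDerivAt I I' 0) (hI0 : I 0 ≠ 0)
    (t : ℝ) :
    HasDerivAt (fun y => stdN (-(y / I y) + I y * √t / 2) -
        exp (y * √t) * stdN (-(y / I y) - I y * √t / 2))
      (√t * (I' * stdNd (-(I 0 * √t / 2)) - stdN (-(I 0 * √t / 2)))) 0 := by
  have hratio : HasDerivAt (fun y => y / I y) (I 0)⁻¹ 0 :=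
    ((hasDerivAt_id' 0).fun_div hI hI0).congr_deriv (by field_simp; ring)
  have hvol : HasDerivAt (fun y => I y * √t / 2) (I' * √t / 2) 0 :=
    (hI.mul_const √t).div_const 2
  have hplus : HasDerivAt (fun y => -(y / I y) + I y * √t / 2) (-(I 0)⁻¹ + I' * √t / 2) 0 :=
    hratio.neg.add hvol
  have hminus : HasDerivAt (fun y => -(y / I y) - I y * √t / 2) (-(I 0)⁻¹ - I' * √t / 2) 0 :=
    hratio.neg.sub hvol
  have hcall := ((hasDerivAt_stdN _).comp 0 hplus).sub
    ((hasDerivAt_mul_const √t).exp.mul ((hasDerivAt_stdN _).comp 0 hminus))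
  refine hcall.congr_deriv ?_
  simp only [Function.comp_apply, zero_div, neg_zero, zero_add, zero_sub, zero_mul, exp_zero,
    one_mul, stdNd_neg]
  ring

theorem stmt16_general (α kbar σbar ηbar β δ : ℝ)
    (hσ : 0 < σbar) (hη : 0 < ηbar)
    (t : ℝ) (ht : 0 < t)
    (μ : Measure ℝ) [IsProbabilityMeasure μ] (hsupp : μ (Set.Iio 0) = 0)
    (I : ℝ → ℝ) (hIpos : ∀ y, 0 < I y) (I' : ℝ) (hI : HasDerivAt I I' 0)
    (heq : ∀ᶠ y in 𝓝 (0:ℝ),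
      (∫ z, (Real.exp (ATSphi α kbar σbar ηbar β δ t * t -
              t * σbar ^ 2 * (ηbar * t ^ δ) * z) *
            stdN (-(y / (σbar * Real.sqrt z)) + ATSl α kbar σbar ηbar β δ t z +
              σbar * Real.sqrt (z * t) / 2) -
          Real.exp (y * Real.sqrt t) *
            stdN (-(y / (σbar * Real.sqrt z)) + ATSl α kbar σbar ηbar β δ t z -
              σbar * Real.sqrt (z * t) / 2)) ∂μ) =
        stdN (-(y / I y) + I y * Real.sqrt t / 2) -
          Real.exp (y * Real.sqrt t) * stdN (-(y / I y) - I y * Real.sqrt t / 2)) :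
    I' = (stdN (-(I 0 * Real.sqrt t / 2)) -
        ∫ z, stdN (ATSl α kbar σbar ηbar β δ t z - σbar * Real.sqrt (z * t) / 2) ∂μ) /
      stdNd (-(I 0 * Real.sqrt t / 2)) := by
  have hμ : ∀ᵐ z ∂μ, 0 ≤ z := measure_mono_null (fun z (hz : ¬0 ≤ z) => not_le.1 hz) hsupp
  have hlhs := hasDerivAt_integral_callIntegrand (φ := ATSphi α kbar σbar ηbar β δ t)
    hσ.ne' (by positivity : 0 ≤ ηbar * t ^ δ) ht.le hμ 0
  have hrhs := (hasDerivAt_impliedCall_zero hI (hIpos 0).ne' t).congr_of_eventuallyEq heq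
  have hskew := hlhs.unique hrhs
  simp only [dMid, zero_mul, exp_zero, mul_one, zero_div, neg_zero, zero_add] at hskew
  unfold ATSl
  rw [eq_div_iff (stdNd_pos _).ne']
  apply mul_left_cancel₀ (sqrt_pos.2 ht).ne'
  linear_combination -hskew

/-- the skew formula obtained via the implicit function theorem: if the
implied volatility `I` is differentiable at `0` and solves the implied volatility
equation near `0`, then
`I′(0) = (N(−I(0)√t/2) − ∫ N(l_t^z − σ̄√(zt)/2) dμ(z)) / N′(−I(0)√t/2)`. -/
theorem stmt16 (α kbar σbar ηbar β δ : ℝ) (hα : α ∈ Set.Ioo (0:ℝ) 1)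
    (hk : 0 < kbar) (hσ : 0 < σbar) (hη : 0 < ηbar)
    (t : ℝ) (ht : 0 < t)
    (μ : Measure ℝ) [IsProbabilityMeasure μ] (hsupp : μ (Set.Iio 0) = 0)
    (hlap : ∀ u ≥ 0, (∫ x, Real.exp (-u * x) ∂μ) = ATSLaplace α kbar β t u)
    (I : ℝ → ℝ) (hIpos : ∀ y, 0 < I y) (I' : ℝ) (hI : HasDerivAt I I' 0)
    (heq : ∀ᶠ y in 𝓝 (0:ℝ),
      (∫ z, (Real.exp (ATSphi α kbar σbar ηbar β δ t * t -
              t * σbar ^ 2 * (ηbar * t ^ δ) * z) *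
            stdN (-(y / (σbar * Real.sqrt z)) + ATSl α kbar σbar ηbar β δ t z +
              σbar * Real.sqrt (z * t) / 2) -
          Real.exp (y * Real.sqrt t) *
            stdN (-(y / (σbar * Real.sqrt z)) + ATSl α kbar σbar ηbar β δ t z -
              σbar * Real.sqrt (z * t) / 2)) ∂μ) =
        stdN (-(y / I y) + I y * Real.sqrt t / 2) -
          Real.exp (y * Real.sqrt t) * stdN (-(y / I y) - I y * Real.sqrt t / 2)) :
    I' = (stdN (-(I 0 * Real.sqrt t / 2)) -
        ∫ z, stdN (ATSl α kbar σbar ηbar β δ t z - σbar * Real.sqrt (z * t) / 2) ∂μ) /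
      stdNd (-(I 0 * Real.sqrt t / 2)) :=
  stmt16_general α kbar σbar ηbar β δ hσ hη t ht μ hsupp I hIpos I' hI heq
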